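/- (Base KL error lemma for truncated noisy Poisson counts.) There exists a universal constant C > 0 such that the following holds. Let m ≥ 1 be an integer, p > 0, b ≥ 0, c ≥ max{b, 1}, and let c_1, c_2 ∈ ℝ ∪ {−∞, +∞}. Let x be a Poisson random variable with mean m·p and let Z ∼ Lap(0, b) be independent of x (with Z = 0 almost surely if b = 0), and set x̃ = max{x + Z, c}. Then E[ 1_{c_1 ≤ x + Z ≤ c_2} · ( p·ln(mp/x̃) + (x̃ − mp)/m ) ] ≤ C·( 1/m + (b² + c²)/(m·max{c, mp}) ). -/

import Mathlib

open MeasureTheory ProbabilityTheory Real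
open scoped ENNReal NNReal

/-- The Laplace distribution `Lap(0, b)` on `ℝ` for `b > 0`, and the point mass at `0`
for `b = 0` (a Laplace variable of scale `0` is `0` almost surely). -/
noncomputable def laplaceMeasure (b : ℝ) : Measure ℝ :=
  if b = 0 then Measure.dirac 0
  else volume.withDensity fun z => ENNReal.ofReal ((1 / (2 * b)) * Real.exp (-|z| / b))

section helpers
open Set Filter Topology
open scoped Nat
section aux

variable {b : ℝ}

lemma tendsto_pow_exp_div (n : ℕ) (hb : 0 < b) :
    Tendsto (fun z : ℝ => z ^ n * exp (-z / b)) atTop (𝓝 0) := by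
  have h1 : Tendsto (fun z : ℝ => z / b) atTop atTop :=
    tendsto_id.atTop_div_const hb
  have h2 := (tendsto_pow_mul_exp_neg_atTop_nhds_zero n).comp h1
  have h3 := h2.const_mul (b ^ n)
  rw [mul_zero] at h3
  refine h3.congr fun z => ?_
  simp only [Function.comp]
  rw [div_pow]
  field_simp

lemma hasDerivAt_exp_decay (hb : 0 < b) (x : ℝ) :
    HasDerivAt (fun z : ℝ => -b * exp (-z / b)) (exp (-x / b)) x := by
  have h : HasDerivAt (fun z : ℝ => -z / b) (-1 / b) x :=
    ((hasDerivAt_id x).neg).div_const b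
  have h2 := (h.exp).const_mul (-b)
  refine h2.congr_deriv ?_
  field_simp

lemma integral_exp_decay (hb : 0 < b) (t : ℝ) :
    ∫ z in Ioi t, exp (-z / b) = b * exp (-t / b) := by
  have ht : Tendsto (fun z : ℝ => -b * exp (-z / b)) atTop (𝓝 0) := by
    have := (tendsto_pow_exp_div 0 hb).const_mul (-b)
    simpa using this
  have := integral_Ioi_of_hasDerivAt_of_nonneg
    (g := fun z : ℝ => -b * exp (-z / b)) (g' := fun z => exp (-z / b)) (a := t) (l := 0)
    ((hasDerivAt_exp_decay hb t).continuousAt.continuousWithinAt)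
    (fun x _ => hasDerivAt_exp_decay hb x) (fun x _ => (exp_pos _).le) ht
  rw [this]; ring

lemma integrableOn_exp_decay (hb : 0 < b) (t : ℝ) :
    IntegrableOn (fun z : ℝ => exp (-z / b)) (Ioi t) := by
  have ht : Tendsto (fun z : ℝ => -b * exp (-z / b)) atTop (𝓝 0) := by
    have := (tendsto_pow_exp_div 0 hb).const_mul (-b)
    simpa using this
  exact integrableOn_Ioi_deriv_of_nonneg
    ((hasDerivAt_exp_decay hb t).continuousAt.continuousWithinAt)
    (fun x _ => hasDerivAt_exp_decay hb x) (fun x _ => (exp_pos _).le) ht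

lemma hasDerivAt_exp_decay1 (hb : 0 < b) (x : ℝ) :
    HasDerivAt (fun z : ℝ => (-b * z - b ^ 2) * exp (-z / b)) (x * exp (-x / b)) x := by
  have h : HasDerivAt (fun z : ℝ => -z / b) (-1 / b) x :=
    ((hasDerivAt_id x).neg).div_const b
  have hp : HasDerivAt (fun z : ℝ => -b * z - b ^ 2) (-b) x := by
    simpa using (((hasDerivAt_id x).const_mul (-b)).sub_const (b ^ 2))
  have h2 := hp.mul h.exp
  refine h2.congr_deriv ?_
  field_simp
  ring

lemma hasDerivAt_exp_decay2 (hb : 0 < b) (x : ℝ) :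
    HasDerivAt (fun z : ℝ => (-b * z ^ 2 - 2 * b ^ 2 * z - 2 * b ^ 3) * exp (-z / b))
      (x ^ 2 * exp (-x / b)) x := by
  have h : HasDerivAt (fun z : ℝ => -z / b) (-1 / b) x :=
    ((hasDerivAt_id x).neg).div_const b
  have hp : HasDerivAt (fun z : ℝ => -b * z ^ 2 - 2 * b ^ 2 * z - 2 * b ^ 3)
      (-b * (2 * x) - 2 * b ^ 2) x := by
    have := (((hasDerivAt_pow 2 x).const_mul (-b)).sub
      ((hasDerivAt_id x).const_mul (2 * b ^ 2))).sub_const (2 * b ^ 3)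
    refine this.congr_deriv ?_
    ring
  have h2 := hp.mul h.exp
  refine h2.congr_deriv ?_
  field_simp
  ring

lemma tendsto_decay1 (hb : 0 < b) :
    Tendsto (fun z : ℝ => (-b * z - b ^ 2) * exp (-z / b)) atTop (𝓝 0) := by
  have h1 := (tendsto_pow_exp_div 1 hb).const_mul (-b)
  have h0 := (tendsto_pow_exp_div 0 hb).const_mul (-b ^ 2)
  have := h1.add h0
  simp only [mul_zero, add_zero] at this
  refine this.congr fun z => ?_
  simp; ring

lemma tendsto_decay2 (hb : 0 < b) :
    Tendsto (fun z : ℝ => (-b * z ^ 2 - 2 * b ^ 2 * z - 2 * b ^ 3) * exp (-z / b)) atTop (𝓝 0) := by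
  have h2 := (tendsto_pow_exp_div 2 hb).const_mul (-b)
  have h1 := (tendsto_pow_exp_div 1 hb).const_mul (-2 * b ^ 2)
  have h0 := (tendsto_pow_exp_div 0 hb).const_mul (-2 * b ^ 3)
  have := (h2.add h1).add h0
  simp only [mul_zero, add_zero] at this
  refine this.congr fun z => ?_
  simp; ring

lemma integral_exp_decay1 (hb : 0 < b) :
    ∫ z in Ioi (0:ℝ), z * exp (-z / b) = b ^ 2 := by
  have := integral_Ioi_of_hasDerivAt_of_nonneg
    ((hasDerivAt_exp_decay1 hb 0).continuousAt.continuousWithinAt)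
    (fun x hx => hasDerivAt_exp_decay1 hb x)
    (fun x hx => by have : (0:ℝ) < x := hx; positivity) (tendsto_decay1 hb)
  rw [this]
  simp

lemma integrableOn_exp_decay1 (hb : 0 < b) :
    IntegrableOn (fun z : ℝ => z * exp (-z / b)) (Ioi (0:ℝ)) :=
  integrableOn_Ioi_deriv_of_nonneg
    ((hasDerivAt_exp_decay1 hb 0).continuousAt.continuousWithinAt)
    (fun x _ => hasDerivAt_exp_decay1 hb x)
    (fun x hx => by have : (0:ℝ) < x := hx; positivity) (tendsto_decay1 hb)

lemma integral_exp_decay2 (hb : 0 < b) :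
    ∫ z in Ioi (0:ℝ), z ^ 2 * exp (-z / b) = 2 * b ^ 3 := by
  have := integral_Ioi_of_hasDerivAt_of_nonneg
    ((hasDerivAt_exp_decay2 hb 0).continuousAt.continuousWithinAt)
    (fun x _ => hasDerivAt_exp_decay2 hb x)
    (fun x hx => by have : (0:ℝ) < x := hx; positivity) (tendsto_decay2 hb)
  rw [this]
  simp

lemma integrableOn_exp_decay2 (hb : 0 < b) :
    IntegrableOn (fun z : ℝ => z ^ 2 * exp (-z / b)) (Ioi (0:ℝ)) :=
  integrableOn_Ioi_deriv_of_nonneg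
    ((hasDerivAt_exp_decay2 hb 0).continuousAt.continuousWithinAt)
    (fun x _ => hasDerivAt_exp_decay2 hb x)
    (fun x hx => by have : (0:ℝ) < x := hx; positivity) (tendsto_decay2 hb)

end aux

section absHelper

lemma lintegral_comp_abs (g : ℝ → ℝ≥0∞) (hg : Measurable g) :
    ∫⁻ z : ℝ, g |z| = 2 * ∫⁻ z in Ioi (0:ℝ), g z := by
  have hmain := lintegral_add_compl (μ := (volume : Measure ℝ)) (fun z : ℝ => g |z|)
    (measurableSet_Iio (a := (0:ℝ)))
  rw [compl_Iio] at hmain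
  have hIci : ∫⁻ z in Ici (0:ℝ), g |z| = ∫⁻ z in Ioi (0:ℝ), g z := by
    rw [← Measure.restrict_congr_set Ioi_ae_eq_Ici]
    refine setLIntegral_congr_fun measurableSet_Ioi (fun z hz => ?_)
    rw [abs_of_nonneg (le_of_lt hz)]
  have hIio : ∫⁻ z in Iio (0:ℝ), g |z| = ∫⁻ z in Ioi (0:ℝ), g z := by
    have hres : (volume : Measure ℝ).restrict (Iio 0) =
        Measure.map Neg.neg ((volume : Measure ℝ).restrict (Ioi 0)) := by
      have hemb : MeasurableEmbedding (Neg.neg : ℝ → ℝ) :=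
        (Homeomorph.neg ℝ).measurableEmbedding
      rw [← Measure.map_neg_eq_self (volume : Measure ℝ), hemb.restrict_map]
      congr 1
      ext z
      simp
    rw [hres, lintegral_map (show Measurable fun z : ℝ => g |z| from hg.comp measurable_abs)
      measurable_neg]
    refine setLIntegral_congr_fun measurableSet_Ioi (fun z hz => ?_)
    rw [abs_neg, abs_of_nonneg (le_of_lt hz)]
  rw [← hmain, hIci, hIio, two_mul]

end absHelper

section laplace

variable {b : ℝ}

lemma laplace_lintegral (hb : 0 < b) (g : ℝ → ℝ) (hg : Measurable g)
    (hgnn : ∀ z ∈ Ioi (0:ℝ), 0 ≤ g z)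
    (hInt : IntegrableOn (fun z => g z * exp (-z / b)) (Ioi (0:ℝ))) :
    ∫⁻ z, ENNReal.ofReal (g |z|) ∂(laplaceMeasure b) =
      ENNReal.ofReal ((1 / b) * ∫ z in Ioi (0:ℝ), g z * exp (-z / b)) := by
  rw [laplaceMeasure, if_neg hb.ne']
  have hrho : Measurable fun z : ℝ => ENNReal.ofReal ((1 / (2 * b)) * Real.exp (-|z| / b)) := by
    fun_prop
  rw [lintegral_withDensity_eq_lintegral_mul _
    hrho (show Measurable fun z : ℝ => ENNReal.ofReal (g |z|) from
      ENNReal.measurable_ofReal.comp (hg.comp measurable_abs))]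
  have heq : ∀ z : ℝ, (ENNReal.ofReal ((1 / (2 * b)) * Real.exp (-|z| / b)) *
      ENNReal.ofReal (g |z|)) = ENNReal.ofReal ((1 / (2*b)) * (g |z| * exp (-|z| / b))) := by
    intro z
    rw [← ENNReal.ofReal_mul (by positivity)]
    ring_nf
  calc ∫⁻ z, (fun z => ENNReal.ofReal ((1 / (2 * b)) * Real.exp (-|z| / b)) ) z *
        (fun z => ENNReal.ofReal (g |z|)) z ∂volume
      = ∫⁻ z : ℝ, (fun t => ENNReal.ofReal ((1 / (2*b)) * (g t * exp (-t / b)))) |z| ∂volume :=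
        lintegral_congr heq
    _ = 2 * ∫⁻ z in Ioi (0:ℝ), ENNReal.ofReal ((1 / (2*b)) * (g z * exp (-z / b))) ∂volume := by
        exact lintegral_comp_abs (fun t => ENNReal.ofReal ((1 / (2*b)) * (g t * exp (-t / b))))
          (ENNReal.measurable_ofReal.comp (measurable_const.mul (hg.mul
            (Real.measurable_exp.comp ((measurable_id.neg).div_const b)))))
    _ = 2 * ENNReal.ofReal (∫ z in Ioi (0:ℝ), (1 / (2*b)) * (g z * exp (-z / b)) ∂volume) := by
        rw [ofReal_integral_eq_lintegral_ofReal]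
        · exact (hInt.const_mul _)
        · exact (ae_restrict_iff' measurableSet_Ioi).2 (ae_of_all _ fun z hz =>
            mul_nonneg (by positivity) (mul_nonneg (hgnn z hz) (exp_pos _).le))
    _ = ENNReal.ofReal ((1 / b) * ∫ z in Ioi (0:ℝ), g z * exp (-z / b)) := by
        rw [integral_const_mul]
        rw [← ENNReal.ofReal_ofNat, ← ENNReal.ofReal_mul (by norm_num)]
        congr 1
        field_simp

lemma laplace_univ (hb : 0 ≤ b) : (laplaceMeasure b) univ = 1 := by
  rcases eq_or_lt_of_le hb with h | h
  · rw [laplaceMeasure, if_pos h.symm]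
    simp
  · have this := laplace_lintegral h (fun _ => 1) measurable_const (fun _ _ => zero_le_one)
      (by simpa using integrableOn_exp_decay h 0)
    simp only [ENNReal.ofReal_one, one_mul] at this
    rw [← lintegral_one, this, integral_exp_decay h 0]
    have hb1 : (1:ℝ)/b * (b * exp (-0/b)) = 1 := by
      rw [neg_zero, zero_div, exp_zero]; field_simp
    rw [hb1, ENNReal.ofReal_one]

end laplace

section moments

variable {b : ℝ}

lemma laplace_abs_moment (hb : 0 ≤ b) :
    ∫⁻ z, ENNReal.ofReal |z| ∂(laplaceMeasure b) ≤ ENNReal.ofReal b := by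
  rcases eq_or_lt_of_le hb with h | h
  · rw [laplaceMeasure, if_pos h.symm, lintegral_dirac]
    simp
  · have hcomp := laplace_lintegral h (fun z => z) measurable_id (fun z hz => le_of_lt hz)
      (integrableOn_exp_decay1 h)
    rw [integral_exp_decay1 h] at hcomp
    have : (1:ℝ)/b * b^2 = b := by field_simp
    rw [this] at hcomp
    exact le_of_eq hcomp

lemma laplace_sq_moment (hb : 0 ≤ b) :
    ∫⁻ z, ENNReal.ofReal (z^2) ∂(laplaceMeasure b) ≤ ENNReal.ofReal (2 * b^2) := by
  rcases eq_or_lt_of_le hb with h | h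
  · rw [laplaceMeasure, if_pos h.symm, lintegral_dirac]
    simp
  · have hcomp := laplace_lintegral h (fun z => z^2) (measurable_id.pow_const 2)
      (fun z hz => sq_nonneg z) (integrableOn_exp_decay2 h)
    rw [integral_exp_decay2 h] at hcomp
    have h2 : (1:ℝ)/b * (2 * b^3) = 2 * b^2 := by field_simp
    rw [h2] at hcomp
    have h3 : ∫⁻ z, ENNReal.ofReal (z^2) ∂(laplaceMeasure b) =
        ∫⁻ z, ENNReal.ofReal ((fun t => t^2) |z|) ∂(laplaceMeasure b) :=
      lintegral_congr fun z => by simp [sq_abs]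
    rw [h3, hcomp]

lemma lintegral_Iic_neg (h : ℝ → ℝ≥0∞) (hm : Measurable h) (t : ℝ) :
    ∫⁻ z in Iic (-t), h z = ∫⁻ z in Ici t, h (-z) := by
  have hres : (volume : Measure ℝ).restrict (Iic (-t)) =
      Measure.map Neg.neg ((volume : Measure ℝ).restrict (Ici t)) := by
    have hemb : MeasurableEmbedding (Neg.neg : ℝ → ℝ) :=
      (Homeomorph.neg ℝ).measurableEmbedding
    have hset : (Neg.neg : ℝ → ℝ) ⁻¹' Iic (-t) = Ici t := by
      ext z; simp
    have h2 := hemb.restrict_map (μ := (volume : Measure ℝ)) (s := Iic (-t))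
    nth_rewrite 1 [Measure.map_neg_eq_self] at h2
    rw [hset] at h2
    exact h2
  rw [hres, lintegral_map hm measurable_neg]

lemma exp_neg_le_cube {b t : ℝ} (hb : 0 < b) (ht : 0 < t) :
    exp (-t/b) ≤ 27 * (b/t)^3 := by
  have h0 : (0:ℝ) < t / (3*b) := by positivity
  have h1 : t/(3*b) ≤ exp (t/(3*b)) := by
    have := Real.add_one_le_exp (t/(3*b))
    linarith
  have h2 : (t/(3*b))^3 ≤ exp (t/(3*b))^3 := pow_le_pow_left₀ h0.le h1 3
  have h3 : exp (t/(3*b))^3 = exp (t/b) := by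
    rw [← Real.exp_nat_mul]
    congr 1
    field_simp
    ring
  rw [h3] at h2
  rw [neg_div, Real.exp_neg]
  have h4 : (0:ℝ) < (t/(3*b))^3 := by positivity
  calc (exp (t/b))⁻¹ ≤ ((t/(3*b))^3)⁻¹ := by
        apply inv_anti₀ h4 h2
    _ = 27 * (b/t)^3 := by
        field_simp
        ring
  
lemma laplace_tail (hb : 0 ≤ b) {t : ℝ} (ht : 0 < t) :
    (laplaceMeasure b) (Iic (-t)) ≤ ENNReal.ofReal ((27/2) * (b/t)^3) := by
  rcases eq_or_lt_of_le hb with h | h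
  · rw [laplaceMeasure, if_pos h.symm]
    rw [Measure.dirac_apply' _ measurableSet_Iic]
    have : (0:ℝ) ∉ Iic (-t) := by simp; linarith
    rw [Set.indicator_of_notMem this]
    exact bot_le
  · rw [laplaceMeasure, if_neg h.ne']
    rw [withDensity_apply _ measurableSet_Iic]
    have hrho : Measurable fun z : ℝ => ENNReal.ofReal ((1 / (2 * b)) * Real.exp (-|z| / b)) := by
      fun_prop
    rw [lintegral_Iic_neg _ hrho t]
    have hIoi : ∫⁻ z in Ici t, ENNReal.ofReal ((1 / (2 * b)) * Real.exp (-|(-z)| / b)) ∂volume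
        = ∫⁻ z in Ioi t, ENNReal.ofReal ((1 / (2 * b)) * Real.exp (-z / b)) ∂volume := by
      rw [← Measure.restrict_congr_set Ioi_ae_eq_Ici]
      refine setLIntegral_congr_fun measurableSet_Ioi (fun z hz => ?_)
      rw [abs_neg, abs_of_nonneg (le_of_lt (ht.trans hz))]
    rw [hIoi, ← ofReal_integral_eq_lintegral_ofReal
      ((integrableOn_exp_decay h t).const_mul _)
      (ae_of_all _ fun z => by positivity)]
    rw [integral_const_mul, integral_exp_decay h t]
    have hval : 1 / (2*b) * (b * exp (-t/b)) = (1/2) * exp (-t/b) := by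
      field_simp
    rw [hval]
    apply ENNReal.ofReal_le_ofReal
    have := exp_neg_le_cube h ht
    nlinarith [this]

end moments

section series

lemma exp_tsum (x : ℝ) : ∑' n : ℕ, x ^ n / n ! = exp x := by
  rw [Real.exp_eq_exp_ℝ, NormedSpace.exp_eq_tsum_div]

lemma shift1 (x : ℝ) (n : ℕ) : (↑(n+1) : ℝ) * x ^ (n+1) / (n+1)! = x * (x ^ n / n !) := by
  rw [Nat.factorial_succ]
  have h1 : ((n:ℝ)+1) ≠ 0 := by positivity
  have h2 : ((n !:ℝ)) ≠ 0 := by positivity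
  push_cast
  field_simp
  ring

lemma summable_T1 (x : ℝ) : Summable (fun n : ℕ => (n:ℝ) * x ^ n / n !) := by
  rw [← summable_nat_add_iff 1]
  exact Summable.congr ((Real.summable_pow_div_factorial x).mul_left x)
    fun n => (shift1 x n).symm

lemma tsum_T1 (x : ℝ) : ∑' n : ℕ, (n:ℝ) * x ^ n / n ! = x * exp x := by
  rw [Summable.tsum_eq_zero_add (summable_T1 x)]
  have : ∀ n : ℕ, (↑(n+1) : ℝ) * x ^ (n+1) / (n+1)! = x * (x ^ n / n !) := shift1 x
  rw [tsum_congr this, tsum_mul_left, exp_tsum]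
  simp

lemma shift2 (x : ℝ) (n : ℕ) : (↑(n+1) : ℝ)^2 * x ^ (n+1) / (n+1)! =
    x * ((n:ℝ) * x ^ n / n ! + x ^ n / n !) := by
  rw [Nat.factorial_succ]
  have h1 : ((n:ℝ)+1) ≠ 0 := by positivity
  have h2 : ((n !:ℝ)) ≠ 0 := by positivity
  push_cast
  field_simp
  ring

lemma summable_T2 (x : ℝ) : Summable (fun n : ℕ => (n:ℝ)^2 * x ^ n / n !) := by
  rw [← summable_nat_add_iff 1]
  exact Summable.congr (((summable_T1 x).add (Real.summable_pow_div_factorial x)).mul_left x)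
    fun n => (shift2 x n).symm

lemma tsum_T2 (x : ℝ) : ∑' n : ℕ, (n:ℝ)^2 * x ^ n / n ! = (x^2 + x) * exp x := by
  rw [Summable.tsum_eq_zero_add (summable_T2 x)]
  rw [tsum_congr (shift2 x), tsum_mul_left,
    Summable.tsum_add (summable_T1 x) (Real.summable_pow_div_factorial x),
    tsum_T1, exp_tsum]
  simp
  ring

end series

section poisMeasure

variable (rr : ℝ≥0)

lemma pois_singleton (n : ℕ) :
    (poissonMeasure rr) {n} = ENNReal.ofReal (exp (-(rr:ℝ)) * (rr:ℝ)^n / n !) := by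
  rw [poissonMeasure, Measure.sum_apply _ (measurableSet_singleton n)]
  simp [Measure.dirac_apply']
  rw [tsum_eq_single n (fun i hi => by simp [hi])]
  simp

lemma pois_lintegral (h : ℕ → ℝ) (hnn : ∀ n, 0 ≤ h n)
    (hsum : Summable (fun n => h n * (exp (-(rr:ℝ)) * (rr:ℝ)^n / n !))) :
    ∫⁻ n, ENNReal.ofReal (h n) ∂(poissonMeasure rr) =
      ENNReal.ofReal (∑' n : ℕ, h n * (exp (-(rr:ℝ)) * (rr:ℝ)^n / n !)) := by
  rw [lintegral_countable' (fun n => ENNReal.ofReal (h n))]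
  rw [ENNReal.ofReal_tsum_of_nonneg (fun n => mul_nonneg (hnn n) (by positivity)) hsum]
  refine tsum_congr fun n => ?_
  rw [pois_singleton, ← ENNReal.ofReal_mul (hnn n)]

lemma pois_mean :
    ∫⁻ n, ENNReal.ofReal (n:ℝ) ∂(poissonMeasure rr) = ENNReal.ofReal (rr:ℝ) := by
  set r : ℝ := (rr:ℝ) with hr
  have hsum : Summable (fun n : ℕ => (n:ℝ) * (exp (-r) * r^n / n !)) := by
    refine Summable.congr ((summable_T1 r).mul_left (exp (-r))) fun n => by ring
  rw [pois_lintegral rr _ (fun n => Nat.cast_nonneg n) hsum]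
  congr 1
  have : ∀ n : ℕ, (n:ℝ) * (exp (-r) * r^n / n !) = exp (-r) * ((n:ℝ) * r^n / n !) :=
    fun n => by ring
  rw [tsum_congr this, tsum_mul_left, tsum_T1]
  rw [exp_neg]
  field_simp

lemma pois_var :
    ∫⁻ n, ENNReal.ofReal (((n:ℝ) - (rr:ℝ))^2) ∂(poissonMeasure rr)
      = ENNReal.ofReal (rr:ℝ) := by
  set r : ℝ := (rr:ℝ) with hr
  have hexp : ∀ n : ℕ, ((n:ℝ) - r)^2 * (exp (-r) * r^n / n !) =
      exp (-r) * ((n:ℝ)^2 * r^n / n !) - (2*r) * (exp (-r) * ((n:ℝ) * r^n / n !))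
        + r^2 * (exp (-r) * (r^n / n !)) := fun n => by ring
  have s2 : Summable (fun n : ℕ => exp (-r) * ((n:ℝ)^2 * r^n / n !)) :=
    (summable_T2 r).mul_left _
  have s1 : Summable (fun n : ℕ => (2*r) * (exp (-r) * ((n:ℝ) * r^n / n !))) :=
    (((summable_T1 r)).mul_left _).mul_left _
  have s0 : Summable (fun n : ℕ => r^2 * (exp (-r) * (r^n / n !))) :=
    ((Real.summable_pow_div_factorial r).mul_left _).mul_left _
  have hsum : Summable (fun n : ℕ => ((n:ℝ) - r)^2 * (exp (-r) * r^n / n !)) := by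
    refine Summable.congr (((s2.sub s1).add s0)) fun n => (hexp n).symm
  rw [pois_lintegral rr _ (fun n => sq_nonneg _) hsum]
  congr 1
  rw [tsum_congr hexp, Summable.tsum_add (s2.sub s1) s0, Summable.tsum_sub s2 s1]
  rw [tsum_mul_left, tsum_mul_left, tsum_mul_left, tsum_mul_left, tsum_mul_left]
  rw [tsum_T1, tsum_T2, exp_tsum]
  rw [exp_neg]
  field_simp
  ring

lemma pois_mgf :
    ∫⁻ n, ENNReal.ofReal (exp (-(n:ℝ))) ∂(poissonMeasure rr)
      = ENNReal.ofReal (exp ((rr:ℝ) * exp (-1) - (rr:ℝ))) := by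
  set r : ℝ := (rr:ℝ) with hr
  have hexp : ∀ n : ℕ, exp (-(n:ℝ)) * (exp (-r) * r^n / n !) =
      exp (-r) * ((r * exp (-1))^n / n !) := by
    intro n
    rw [mul_pow, ← Real.exp_nat_mul]
    have : (n:ℝ) * (-1) = -(n:ℝ) := by ring
    rw [this]
    ring
  have hsum : Summable (fun n : ℕ => exp (-(n:ℝ)) * (exp (-r) * r^n / n !)) := by
    refine Summable.congr ((Real.summable_pow_div_factorial (r * exp (-1))).mul_left
      (exp (-r))) fun n => (hexp n).symm
  rw [pois_lintegral rr _ (fun n => (exp_pos _).le) hsum]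
  congr 1
  rw [tsum_congr hexp, tsum_mul_left, exp_tsum, ← Real.exp_add]
  congr 1
  ring

lemma pois_tail {r : ℝ} (hrr : (rr:ℝ) = r) :
    (poissonMeasure rr) {n : ℕ | (n:ℝ) < r/2}
      ≤ ENNReal.ofReal (exp (-(1/2 - exp (-1)) * r)) := by
  have hsub : {n : ℕ | (n:ℝ) < r/2} ⊆
      {n : ℕ | ENNReal.ofReal (exp (-(r/2))) ≤ ENNReal.ofReal (exp (-(n:ℝ)))} := by
    intro n hn
    simp only [mem_setOf_eq] at hn ⊢
    exact ENNReal.ofReal_le_ofReal (exp_le_exp.2 (by linarith))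
  refine (measure_mono hsub).trans ?_
  have hmark := meas_ge_le_lintegral_div
    (μ := poissonMeasure rr) (f := fun n => ENNReal.ofReal (exp (-(n:ℝ))))
    ((measurable_of_countable _).aemeasurable) (ε := ENNReal.ofReal (exp (-(r/2))))
    (by simp [exp_pos]) ENNReal.ofReal_ne_top
  refine hmark.trans ?_
  rw [pois_mgf, hrr, ← ENNReal.ofReal_div_of_pos (exp_pos _), ← Real.exp_sub]
  apply ENNReal.ofReal_le_ofReal
  apply exp_le_exp.2
  apply le_of_eq
  ring

end poisMeasure

section pointwise
variable {M p t c' : ℝ}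

lemma g_nonneg (hM : 0 < M) (hp : 0 < p) (ht : 0 < t) :
    0 ≤ p * log ((M*p)/t) + (t - M*p)/M := by
  have h1 : log (t/(M*p)) ≤ t/(M*p) - 1 := Real.log_le_sub_one_of_pos (by positivity)
  have h2 : log ((M*p)/t) = - log (t/(M*p)) := by
    rw [← Real.log_inv, inv_div]
  have h3 : p * (t/(M*p) - 1) = (t - M*p)/M := by field_simp
  have h4 : p * log (t/(M*p)) ≤ (t - M*p)/M := by
    rw [← h3]; exact mul_le_mul_of_nonneg_left h1 hp.le
  rw [h2]; linarith

lemma g_le_linear (hM : 0 < M) (hp : 0 < p) (ht : M*p ≤ t) (ht0 : 0 < t) :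
    p * log ((M*p)/t) + (t - M*p)/M ≤ t/M := by
  have h1 : log ((M*p)/t) ≤ 0 := Real.log_nonpos (by positivity) ((div_le_one ht0).2 ht)
  have h2 : p * log ((M*p)/t) ≤ 0 := mul_nonpos_of_nonneg_of_nonpos hp.le h1
  have h3 : (t - M*p)/M ≤ t/M := by gcongr; nlinarith
  linarith

lemma g_le_quad (hM : 0 < M) (hp : 0 < p) (ht : (M*p)/4 ≤ t) (ht0 : 0 < t) :
    p * log ((M*p)/t) + (t - M*p)/M ≤ 4*(t - M*p)^2/(M*(M*p)) := by
  have h1 : log ((M*p)/t) ≤ (M*p)/t - 1 := Real.log_le_sub_one_of_pos (by positivity)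
  have h2 : p * log ((M*p)/t) ≤ p * ((M*p)/t - 1) := mul_le_mul_of_nonneg_left h1 hp.le
  have h3 : p*((M*p)/t - 1) + (t - M*p)/M = (t - M*p)^2/(M*t) := by field_simp; ring
  have h4 : (t - M*p)^2/(M*t) ≤ 4*(t-M*p)^2/(M*(M*p)) := by
    rw [div_le_div_iff₀ (by positivity) (by positivity)]
    nlinarith [mul_nonneg (mul_nonneg (sq_nonneg (t - M*p)) hM.le)
      (show (0:ℝ) ≤ 4*t - M*p by linarith)]
  linarith

lemma g_le_const (hM : 0 < M) (hp : 0 < p) (hct : c' ≤ t) (htL : t ≤ M*p) (hc0 : 0 < c') :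
    p * log ((M*p)/t) + (t - M*p)/M ≤ p*((M*p)/c') := by
  have h0 : 0 < t := lt_of_lt_of_le hc0 hct
  have h1 : log ((M*p)/t) ≤ log ((M*p)/c') := by
    apply Real.log_le_log (by positivity)
    gcongr
  have h2 : log ((M*p)/c') ≤ (M*p)/c' := by
    have := Real.log_le_sub_one_of_pos (show (0:ℝ) < (M*p)/c' by positivity)
    linarith
  have h3 : p * log ((M*p)/t) ≤ p * ((M*p)/c') :=
    mul_le_mul_of_nonneg_left (h1.trans h2) hp.le
  have h4 : (t - M*p)/M ≤ 0 := div_nonpos_of_nonpos_of_nonneg (by linarith) hM.le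
  linarith

lemma exp_quad {d t : ℝ} (hd : 0 < d) (ht : 0 ≤ t) : t^2 * exp (-(d*t)) ≤ 4/d^2 := by
  have h1 : 1 + d*t/2 ≤ exp (d*t/2) := Real.add_one_le_exp _ |>.trans_eq' (by ring)
  have h2 : exp (d*t/2) ^ 2 = exp (d*t) := by
    rw [← Real.exp_nat_mul]; congr 1; push_cast; ring
  have h3 : (d*t/2)^2 ≤ exp (d*t) := by
    rw [← h2]
    apply pow_le_pow_left₀ (by positivity) (by nlinarith) 2
  rw [Real.exp_neg]
  rw [mul_inv_le_iff₀ (exp_pos _), div_mul_eq_mul_div, le_div_iff₀ (by positivity)]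
  nlinarith [sq_nonneg t, sq_nonneg d]
end pointwise

section prodHelpers

lemma lint_fst {μ : Measure ℕ} {ν : Measure ℝ} [SFinite ν] (hν : ν univ = 1) (u : ℕ → ℝ≥0∞) :
    ∫⁻ ω : ℕ × ℝ, u ω.1 ∂(μ.prod ν) = ∫⁻ n, u n ∂μ := by
  rw [lintegral_prod _ (show AEMeasurable (fun ω : ℕ × ℝ => u ω.1) (μ.prod ν) from
    ((measurable_of_countable u).comp measurable_fst).aemeasurable)]
  simp only [lintegral_const, hν, mul_one]

lemma lint_snd {μ : Measure ℕ} [IsProbabilityMeasure μ] {ν : Measure ℝ} [SFinite ν]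
    (w : ℝ → ℝ≥0∞) (hw : Measurable w) :
    ∫⁻ ω : ℕ × ℝ, w ω.2 ∂(μ.prod ν) = ∫⁻ z, w z ∂ν := by
  rw [lintegral_prod _ (show AEMeasurable (fun ω : ℕ × ℝ => w ω.2) (μ.prod ν) from
    (hw.comp measurable_snd).aemeasurable)]
  simp only []
  rw [show (fun x : ℕ => ∫⁻ y, w (x, y).2 ∂ν) = fun _ : ℕ => ∫⁻ z, w z ∂ν from rfl]
  rw [lintegral_const, measure_univ, mul_one]

end prodHelpers
end helpers
set_option maxHeartbeats 1000000 in
/-- **Base KL error lemma for truncated noisy Poisson counts**: there is a universal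
constant `C > 0` such that for `x ∼ Poi(m·p)`, independent `Z ∼ Lap(0, b)`,
`x̃ = max{x + Z, c}` with `c ≥ max{b, 1}`, and any (extended-real) truncation window
`[c₁, c₂]`, one has
`E[1_{c₁ ≤ x+Z ≤ c₂}·(p·ln(mp/x̃) + (x̃ − mp)/m)] ≤ C·(1/m + (b² + c²)/(m·max{c, mp}))`. -/
theorem base_KL_error_lemma :
    ∃ C : ℝ, 0 < C ∧
      ∀ (m : ℕ), 1 ≤ m → ∀ (p b c : ℝ), 0 < p → 0 ≤ b → max b 1 ≤ c →
        ∀ (c₁ c₂ : EReal),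
          (∫ ω in {ω : ℕ × ℝ | c₁ ≤ (((ω.1 : ℝ) + ω.2 : ℝ) : EReal) ∧
              (((ω.1 : ℝ) + ω.2 : ℝ) : EReal) ≤ c₂},
            (p * Real.log ((m : ℝ) * p / max ((ω.1 : ℝ) + ω.2) c) +
              (max ((ω.1 : ℝ) + ω.2) c - (m : ℝ) * p) / (m : ℝ))
            ∂((poissonMeasure ((m : ℝ) * p).toNNReal).prod (laplaceMeasure b)))
          ≤ C * (1 / (m : ℝ) + (b ^ 2 + c ^ 2) / ((m : ℝ) * max c ((m : ℝ) * p))) := by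
  refine ⟨1000, by norm_num, ?_⟩
  intro m hm p b c hp hb hc c₁ c₂
  have hM1 : (1:ℝ) ≤ (m:ℝ) := by exact_mod_cast hm
  have hM0 : (0:ℝ) < (m:ℝ) := lt_of_lt_of_le zero_lt_one hM1
  set M : ℝ := (m:ℝ) with hMdef
  set L : ℝ := M * p with hLdef
  have hL0 : 0 < L := by positivity
  have hbc : b ≤ c := le_trans (le_max_left _ _) hc
  have hc1 : (1:ℝ) ≤ c := le_trans (le_max_right _ _) hc
  have hc0 : (0:ℝ) < c := lt_of_lt_of_le zero_lt_one hc1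
  set rr : ℝ≥0 := L.toNNReal with hrrdef
  have hrr : (rr:ℝ) = L := Real.coe_toNNReal _ hL0.le
  set μ := poissonMeasure rr with hμdef
  set ν := laplaceMeasure b with hνdef
  have hν1 : ν Set.univ = 1 := laplace_univ hb
  haveI : IsProbabilityMeasure ν := ⟨hν1⟩
  set f : ℕ × ℝ → ℝ := fun ω =>
    p * Real.log (L / max ((ω.1 : ℝ) + ω.2) c) + (max ((ω.1 : ℝ) + ω.2) c - L) / M with hfdef
  have hmes1 : Measurable fun ω : ℕ × ℝ => ((ω.1:ℝ) + ω.2) :=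
    ((measurable_of_countable _).comp measurable_fst).add measurable_snd
  have hmes2 : Measurable fun ω : ℕ × ℝ => max ((ω.1:ℝ) + ω.2) c := hmes1.max measurable_const
  have hmesf : Measurable f := by
    apply Measurable.add
    · exact measurable_const.mul (Real.measurable_log.comp (measurable_const.div hmes2))
    · exact (hmes2.sub measurable_const).div_const M
  have hmaxpos : ∀ ω : ℕ × ℝ, 0 < max ((ω.1:ℝ) + ω.2) c :=
    fun ω => lt_of_lt_of_le hc0 (le_max_right _ _)
  have hfnn : ∀ ω, 0 ≤ f ω := fun ω => g_nonneg hM0 hp (hmaxpos ω)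
  set R : ℝ := 1000 * (1 / M + (b ^ 2 + c ^ 2) / (M * max c L)) with hRdef
  have hR0 : 0 ≤ R := by
    have h1 : 0 < max c L := lt_of_lt_of_le hc0 (le_max_left _ _)
    have : 0 ≤ (b^2 + c^2) / (M * max c L) := by positivity
    have : 0 ≤ 1/M := by positivity
    rw [hRdef]; positivity
  have key : ∫⁻ ω, ENNReal.ofReal (f ω) ∂(μ.prod ν) ≤ ENNReal.ofReal R := by
    rcases le_or_gt L c with hcase | hcase
    · -- Case 1 : L ≤ c
      have hpt : ∀ ω : ℕ × ℝ, ENNReal.ofReal (f ω) ≤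
          ENNReal.ofReal (c/M) + ENNReal.ofReal (1/M * (ω.1:ℝ)) +
            ENNReal.ofReal (1/M * |ω.2|) := by
        intro ω
        have h1 : f ω ≤ (max ((ω.1:ℝ) + ω.2) c)/M :=
          g_le_linear hM0 hp (le_trans hcase (le_max_right _ _)) (hmaxpos ω)
        have h2 : max ((ω.1:ℝ) + ω.2) c ≤ c + (ω.1:ℝ) + |ω.2| := by
          apply max_le
          · linarith [le_abs_self ω.2, hc0.le, Nat.cast_nonneg (α := ℝ) ω.1]
          · linarith [abs_nonneg ω.2, Nat.cast_nonneg (α := ℝ) ω.1]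
        have h3 : f ω ≤ c/M + 1/M * (ω.1:ℝ) + 1/M * |ω.2| := by
          calc f ω ≤ (max ((ω.1:ℝ) + ω.2) c)/M := h1
            _ ≤ (c + (ω.1:ℝ) + |ω.2|)/M := by gcongr
            _ = c/M + 1/M * (ω.1:ℝ) + 1/M * |ω.2| := by ring
        calc ENNReal.ofReal (f ω)
            ≤ ENNReal.ofReal (c/M + 1/M * (ω.1:ℝ) + 1/M * |ω.2|) :=
              ENNReal.ofReal_le_ofReal h3
          _ ≤ ENNReal.ofReal (c/M + 1/M * (ω.1:ℝ)) + ENNReal.ofReal (1/M * |ω.2|) :=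
              ENNReal.ofReal_add_le
          _ ≤ ENNReal.ofReal (c/M) + ENNReal.ofReal (1/M * (ω.1:ℝ)) +
              ENNReal.ofReal (1/M * |ω.2|) := by
              exact add_le_add_left ENNReal.ofReal_add_le _
      refine le_trans (lintegral_mono hpt) ?_
      have hmB : Measurable fun ω : ℕ × ℝ => ENNReal.ofReal (1/M * (ω.1:ℝ)) :=
        (((measurable_of_countable _).comp measurable_fst :
          Measurable fun ω : ℕ × ℝ => (ω.1:ℝ)).const_mul (1/M)).ennreal_ofReal
      have hmC : Measurable fun ω : ℕ × ℝ => ENNReal.ofReal (1/M * |ω.2|) :=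
        ((measurable_snd.abs).const_mul (1/M)).ennreal_ofReal
      rw [lintegral_add_right _ hmC, lintegral_add_right _ hmB]
      have hTA : ∫⁻ _ω : ℕ × ℝ, ENNReal.ofReal (c/M) ∂(μ.prod ν) = ENNReal.ofReal (c/M) := by
        rw [lintegral_const, measure_univ, mul_one]
      have hTB : ∫⁻ ω : ℕ × ℝ, ENNReal.ofReal (1/M * (ω.1:ℝ)) ∂(μ.prod ν)
          = ENNReal.ofReal (1/M) * ENNReal.ofReal L := by
        have hcong : (fun ω : ℕ × ℝ => ENNReal.ofReal (1/M * (ω.1:ℝ)))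
            = fun ω : ℕ × ℝ => (fun n : ℕ => ENNReal.ofReal (1/M) * ENNReal.ofReal (n:ℝ)) ω.1 := by
          funext ω
          rw [ENNReal.ofReal_mul (by positivity)]
        have hmean := pois_mean rr
        rw [hrr] at hmean
        calc ∫⁻ ω : ℕ × ℝ, ENNReal.ofReal (1/M * (ω.1:ℝ)) ∂(μ.prod ν)
            = ∫⁻ n : ℕ, ENNReal.ofReal (1/M) * ENNReal.ofReal (n:ℝ) ∂μ := by
              rw [hcong]
              exact lint_fst hν1 (fun n : ℕ => ENNReal.ofReal (1/M) * ENNReal.ofReal (n:ℝ))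
          _ = ENNReal.ofReal (1/M) * ∫⁻ n : ℕ, ENNReal.ofReal (n:ℝ) ∂μ :=
              lintegral_const_mul _ (measurable_of_countable _)
          _ = ENNReal.ofReal (1/M) * ENNReal.ofReal L := by rw [hmean]
      have hTC : ∫⁻ ω : ℕ × ℝ, ENNReal.ofReal (1/M * |ω.2|) ∂(μ.prod ν)
          ≤ ENNReal.ofReal (1/M) * ENNReal.ofReal b := by
        have hcong : (fun ω : ℕ × ℝ => ENNReal.ofReal (1/M * |ω.2|))
            = fun ω : ℕ × ℝ => (fun z : ℝ => ENNReal.ofReal (1/M) * ENNReal.ofReal |z|) ω.2 := by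
          funext ω
          rw [ENNReal.ofReal_mul (by positivity)]
        calc ∫⁻ ω : ℕ × ℝ, ENNReal.ofReal (1/M * |ω.2|) ∂(μ.prod ν)
            = ∫⁻ z : ℝ, ENNReal.ofReal (1/M) * ENNReal.ofReal |z| ∂ν := by
              rw [hcong]
              exact lint_snd (μ := μ) (fun z : ℝ => ENNReal.ofReal (1/M) * ENNReal.ofReal |z|)
                ((measurable_abs.ennreal_ofReal).const_mul _)
          _ = ENNReal.ofReal (1/M) * ∫⁻ z : ℝ, ENNReal.ofReal |z| ∂ν :=
              lintegral_const_mul _ (measurable_abs.ennreal_ofReal)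
          _ ≤ ENNReal.ofReal (1/M) * ENNReal.ofReal b :=
              mul_le_mul_right (laplace_abs_moment hb) _
      rw [hTA, hTB]
      refine le_trans (add_le_add_right hTC _) ?_
      rw [← ENNReal.ofReal_mul (by positivity), ← ENNReal.ofReal_mul (by positivity)]
      rw [← ENNReal.ofReal_add (by positivity) (by positivity),
        ← ENNReal.ofReal_add (by positivity) (by positivity)]
      apply ENNReal.ofReal_le_ofReal
      -- real inequality
      have hmx : max c L = c := max_eq_left hcase
      rw [hRdef, hmx]
      have hQ : c/M ≤ (b^2 + c^2)/(M*c) := by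
        rw [div_le_div_iff₀ (by positivity) (by positivity)]
        nlinarith [sq_nonneg b]
      have hLM : L/M ≤ c/M := by gcongr
      have hbM : b/M ≤ c/M := by gcongr
      have hQ0 : 0 ≤ (b^2 + c^2)/(M*c) := by positivity
      have hM0' : 0 < 1/M := by positivity
      have e1 : 1/M * L = L/M := by ring
      have e2 : 1/M * b = b/M := by ring
      rw [e1, e2]
      linarith
    · -- Case 2 : c < L
      obtain ⟨d, hddef⟩ : ∃ d : ℝ, d = 1/2 - Real.exp (-1) := ⟨_, rfl⟩
      have hd1 : (1:ℝ)/10 ≤ d := by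
        have he : (5:ℝ)/2 ≤ Real.exp 1 := by
          have := Real.exp_one_gt_d9; linarith
        have h2 : Real.exp (-1) ≤ 2/5 := by
          rw [Real.exp_neg]
          have := inv_anti₀ (show (0:ℝ) < 5/2 by norm_num) he
          linarith [this]
        rw [hddef]; linarith
      have hd0 : (0:ℝ) < d := lt_of_lt_of_le (by norm_num) hd1
      obtain ⟨K, hKdef⟩ : ∃ K : ℝ, K = p * (L/c) := ⟨_, rfl⟩
      have hK0 : 0 ≤ K := by rw [hKdef]; positivity
      set A : Set ℕ := {n : ℕ | (n:ℝ) < L/2} with hAdef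
      set B : Set ℝ := Set.Iic (-(L/4)) with hBdef
      have hpt : ∀ ω : ℕ × ℝ, ENNReal.ofReal (f ω) ≤
          ENNReal.ofReal (8/(M*L) * ((ω.1:ℝ) - L)^2) + ENNReal.ofReal (8/(M*L) * ω.2^2)
          + Set.indicator A (fun _ => ENNReal.ofReal K) ω.1
          + Set.indicator B (fun _ => ENNReal.ofReal K) ω.2 := by
        intro ω
        rcases le_or_gt (L/4) (max ((ω.1:ℝ) + ω.2) c) with hq | hq
        · -- quadratic regime
          have h1 : f ω ≤ 4*(max ((ω.1:ℝ) + ω.2) c - L)^2/(M*L) :=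
            g_le_quad hM0 hp hq (hmaxpos ω)
          have h2 : (max ((ω.1:ℝ) + ω.2) c - L)^2 ≤ ((ω.1:ℝ) + ω.2 - L)^2 := by
            rcases le_total ((ω.1:ℝ) + ω.2) c with hs | hs
            · rw [max_eq_right hs]
              nlinarith [hcase.le]
            · rw [max_eq_left hs]
          have h3 : ((ω.1:ℝ) + ω.2 - L)^2 ≤ 2*((ω.1:ℝ) - L)^2 + 2*ω.2^2 := by
            nlinarith [sq_nonneg ((ω.1:ℝ) - L - ω.2)]
          have h4 : f ω ≤ 8/(M*L) * ((ω.1:ℝ) - L)^2 + 8/(M*L) * ω.2^2 := by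
            calc f ω ≤ 4*(max ((ω.1:ℝ) + ω.2) c - L)^2/(M*L) := h1
              _ ≤ 4*(2*((ω.1:ℝ) - L)^2 + 2*ω.2^2)/(M*L) := by
                  gcongr
                  linarith
              _ = 8/(M*L) * ((ω.1:ℝ) - L)^2 + 8/(M*L) * ω.2^2 := by ring
          calc ENNReal.ofReal (f ω)
              ≤ ENNReal.ofReal (8/(M*L) * ((ω.1:ℝ) - L)^2 + 8/(M*L) * ω.2^2) :=
                ENNReal.ofReal_le_ofReal h4
            _ ≤ ENNReal.ofReal (8/(M*L) * ((ω.1:ℝ) - L)^2) +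
                ENNReal.ofReal (8/(M*L) * ω.2^2) := ENNReal.ofReal_add_le
            _ ≤ _ := le_add_right (le_add_right le_rfl)
        · -- tail regime
          have htc : c ≤ max ((ω.1:ℝ) + ω.2) c := le_max_right _ _
          have htL : max ((ω.1:ℝ) + ω.2) c ≤ L := by linarith
          have hfK : f ω ≤ K := by
            have := g_le_const hM0 hp htc htL hc0
            rw [hKdef, hLdef]
            exact this
          have hsmall : (ω.1:ℝ) + ω.2 < L/4 := lt_of_le_of_lt (le_max_left _ _) hq
          rcases lt_or_ge ((ω.1:ℝ)) (L/2) with hn | hn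
          · have hmem : ω.1 ∈ A := hn
            rw [Set.indicator_of_mem hmem]
            calc ENNReal.ofReal (f ω) ≤ ENNReal.ofReal K := ENNReal.ofReal_le_ofReal hfK
              _ ≤ (ENNReal.ofReal (8/(M*L) * ((ω.1:ℝ) - L)^2) +
                    ENNReal.ofReal (8/(M*L) * ω.2^2) + ENNReal.ofReal K) := le_add_self
              _ ≤ _ := le_add_right le_rfl
          · have hz : ω.2 ∈ B := by
              simp only [hBdef, Set.mem_Iic]
              linarith
            rw [Set.indicator_of_mem hz]
            calc ENNReal.ofReal (f ω) ≤ ENNReal.ofReal K := ENNReal.ofReal_le_ofReal hfK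
              _ ≤ _ := le_add_self
      refine le_trans (lintegral_mono hpt) ?_
      have hmB : Measurable fun ω : ℕ × ℝ => ENNReal.ofReal (8/(M*L) * ω.2^2) :=
        ((measurable_snd.pow_const 2).const_mul _).ennreal_ofReal
      have hmC : Measurable fun ω : ℕ × ℝ => Set.indicator A (fun _ => ENNReal.ofReal K) ω.1 :=
        (measurable_of_countable (Set.indicator A fun _ => ENNReal.ofReal K)).comp
          measurable_fst
      have hmD : Measurable fun ω : ℕ × ℝ => Set.indicator B (fun _ => ENNReal.ofReal K) ω.2 :=
        (measurable_const.indicator measurableSet_Iic).comp measurable_snd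
      rw [lintegral_add_right _ hmD, lintegral_add_right _ hmC, lintegral_add_right _ hmB]
      -- term 1
      have hT1 : ∫⁻ ω : ℕ × ℝ, ENNReal.ofReal (8/(M*L) * ((ω.1:ℝ) - L)^2) ∂(μ.prod ν)
          = ENNReal.ofReal (8/(M*L)) * ENNReal.ofReal L := by
        have hvar := pois_var rr
        rw [hrr] at hvar
        have hcong : (fun ω : ℕ × ℝ => ENNReal.ofReal (8/(M*L) * ((ω.1:ℝ) - L)^2))
            = fun ω : ℕ × ℝ => (fun n : ℕ =>
                ENNReal.ofReal (8/(M*L)) * ENNReal.ofReal (((n:ℝ) - L)^2)) ω.1 := by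
          funext ω
          rw [ENNReal.ofReal_mul (by positivity)]
        calc ∫⁻ ω : ℕ × ℝ, ENNReal.ofReal (8/(M*L) * ((ω.1:ℝ) - L)^2) ∂(μ.prod ν)
            = ∫⁻ n : ℕ, ENNReal.ofReal (8/(M*L)) * ENNReal.ofReal (((n:ℝ) - L)^2) ∂μ := by
              rw [hcong]
              exact lint_fst hν1 (fun n : ℕ =>
                ENNReal.ofReal (8/(M*L)) * ENNReal.ofReal (((n:ℝ) - L)^2))
          _ = ENNReal.ofReal (8/(M*L)) * ∫⁻ n : ℕ, ENNReal.ofReal (((n:ℝ) - L)^2) ∂μ :=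
              lintegral_const_mul _ (measurable_of_countable _)
          _ = ENNReal.ofReal (8/(M*L)) * ENNReal.ofReal L := by rw [hvar]
      -- term 2
      have hT2 : ∫⁻ ω : ℕ × ℝ, ENNReal.ofReal (8/(M*L) * ω.2^2) ∂(μ.prod ν)
          ≤ ENNReal.ofReal (8/(M*L)) * ENNReal.ofReal (2*b^2) := by
        have hcong : (fun ω : ℕ × ℝ => ENNReal.ofReal (8/(M*L) * ω.2^2))
            = fun ω : ℕ × ℝ => (fun z : ℝ =>
                ENNReal.ofReal (8/(M*L)) * ENNReal.ofReal (z^2)) ω.2 := by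
          funext ω
          rw [ENNReal.ofReal_mul (by positivity)]
        calc ∫⁻ ω : ℕ × ℝ, ENNReal.ofReal (8/(M*L) * ω.2^2) ∂(μ.prod ν)
            = ∫⁻ z : ℝ, ENNReal.ofReal (8/(M*L)) * ENNReal.ofReal (z^2) ∂ν := by
              rw [hcong]
              exact lint_snd (μ := μ) (fun z : ℝ =>
                ENNReal.ofReal (8/(M*L)) * ENNReal.ofReal (z^2))
                (((measurable_id.pow_const 2).ennreal_ofReal).const_mul _)
          _ = ENNReal.ofReal (8/(M*L)) * ∫⁻ z : ℝ, ENNReal.ofReal (z^2) ∂ν :=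
              lintegral_const_mul _ ((measurable_id.pow_const 2).ennreal_ofReal)
          _ ≤ ENNReal.ofReal (8/(M*L)) * ENNReal.ofReal (2*b^2) :=
              mul_le_mul_right (laplace_sq_moment hb) _
      -- term 3
      have hT3 : ∫⁻ ω : ℕ × ℝ, Set.indicator A (fun _ => ENNReal.ofReal K) ω.1 ∂(μ.prod ν)
          ≤ ENNReal.ofReal K * ENNReal.ofReal (Real.exp (-(d * L))) := by
        have htail := pois_tail rr hrr
        calc ∫⁻ ω : ℕ × ℝ, Set.indicator A (fun _ => ENNReal.ofReal K) ω.1 ∂(μ.prod ν)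
            = ∫⁻ n : ℕ, Set.indicator A (fun _ => ENNReal.ofReal K) n ∂μ :=
              lint_fst hν1 (Set.indicator A fun _ => ENNReal.ofReal K)
          _ = ENNReal.ofReal K * μ A := by
              rw [lintegral_indicator_const ((Set.to_countable A).measurableSet)]
          _ ≤ ENNReal.ofReal K * ENNReal.ofReal (Real.exp (-(d * L))) := by
              apply mul_le_mul_right
              refine le_trans htail (le_of_eq ?_)
              congr 1
              rw [hddef]
              ring_nf
      -- term 4
      have hT4 : ∫⁻ ω : ℕ × ℝ, Set.indicator B (fun _ => ENNReal.ofReal K) ω.2 ∂(μ.prod ν)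
          ≤ ENNReal.ofReal K * ENNReal.ofReal ((27/2) * (b/(L/4))^3) := by
        have htail := laplace_tail hb (show (0:ℝ) < L/4 by positivity)
        calc ∫⁻ ω : ℕ × ℝ, Set.indicator B (fun _ => ENNReal.ofReal K) ω.2 ∂(μ.prod ν)
            = ∫⁻ z : ℝ, Set.indicator B (fun _ => ENNReal.ofReal K) z ∂ν :=
              lint_snd (μ := μ) (Set.indicator B fun _ => ENNReal.ofReal K)
                (measurable_const.indicator measurableSet_Iic)
          _ = ENNReal.ofReal K * ν B := by
              rw [lintegral_indicator_const measurableSet_Iic]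
          _ ≤ ENNReal.ofReal K * ENNReal.ofReal ((27/2) * (b/(L/4))^3) :=
              mul_le_mul_right htail _
      rw [hT1]
      refine le_trans (add_le_add (add_le_add (add_le_add_right hT2 _) hT3) hT4) ?_
      -- combine into one ofReal
      rw [← ENNReal.ofReal_mul (by positivity), ← ENNReal.ofReal_mul (by positivity),
        ← ENNReal.ofReal_mul hK0, ← ENNReal.ofReal_mul hK0,
        ← ENNReal.ofReal_add (by positivity) (by positivity),
        ← ENNReal.ofReal_add (by positivity) (by positivity),
        ← ENNReal.ofReal_add (by positivity) (by positivity)]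
      apply ENNReal.ofReal_le_ofReal
      -- now a pure real estimate
      have hmx : max c L = L := max_eq_right hcase.le
      rw [hRdef, hmx]
      have e1 : 8/(M*L) * L = 8/M := by field_simp
      have e2 : 8/(M*L) * (2*b^2) = 16 * (b^2/(M*L)) := by field_simp; ring
      have e3 : K * Real.exp (-(d * L)) ≤ 400/M := by
        have hq := exp_quad hd0 hL0.le
        have h42 : 4/d^2 ≤ 400 := by
          rw [div_le_iff₀ (by positivity)]
          have hdd : (1/10:ℝ)^2 ≤ d^2 := pow_le_pow_left₀ (by norm_num) hd1 2
          nlinarith [hdd]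
        have hstep1 : K ≤ p * L := by
          rw [hKdef]
          have : L/c ≤ L := div_le_self hL0.le hc1
          nlinarith [hp.le]
        have hstep2 : K * Real.exp (-(d*L)) ≤ p * L * Real.exp (-(d*L)) := by
          apply mul_le_mul_of_nonneg_right hstep1 (Real.exp_pos _).le
        have hid : p * L * Real.exp (-(d*L)) = 1/M * (L^2 * Real.exp (-(d*L))) := by
          rw [hLdef]; field_simp
        have hstep3 : 1/M * (L^2 * Real.exp (-(d*L))) ≤ 1/M * 400 := by
          apply mul_le_mul_of_nonneg_left (le_trans hq h42) (by positivity)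
        calc K * Real.exp (-(d*L)) ≤ p * L * Real.exp (-(d*L)) := hstep2
          _ = 1/M * (L^2 * Real.exp (-(d*L))) := hid
          _ ≤ 1/M * 400 := hstep3
          _ = 400/M := by ring
      have e4 : K * ((27/2) * (b/(L/4))^3) ≤ 864 * (b^2/(M*L)) := by
        have hident : K * ((27/2) * (b/(L/4))^3) = 864 * (b^3/(M*c*L)) := by
          rw [hKdef, hLdef]
          field_simp
          ring
        rw [hident]
        have : b^3/(M*c*L) ≤ b^2/(M*L) := by
          rw [div_le_div_iff₀ (by positivity) (by positivity)]
          nlinarith [mul_nonneg (mul_nonneg (sq_nonneg b) (mul_pos hM0 hL0).le)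
            (sub_nonneg.2 hbc)]
        linarith
      rw [e1, e2]
      have hfinal : 8/M + 16*(b^2/(M*L)) + K * Real.exp (-(d * L)) + K * ((27/2) * (b/(L/4))^3)
          ≤ 1000 * (1/M + (b^2 + c^2)/(M*L)) := by
        have h1 : b^2/(M*L) ≤ (b^2 + c^2)/(M*L) := by
          gcongr
          nlinarith [sq_nonneg c]
        have h2 : (0:ℝ) ≤ (b^2+c^2)/(M*L) := by positivity
        have h3 : (0:ℝ) < 1/M := by positivity
        have h4 : 8/M = 8*(1/M) := by ring
        have h5 : 400/M = 400*(1/M) := by ring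
        nlinarith [e3, e4, h1, h2, h3]
      exact hfinal
  -- conclude
  set s : Set (ℕ × ℝ) := {ω : ℕ × ℝ | c₁ ≤ (((ω.1 : ℝ) + ω.2 : ℝ) : EReal) ∧
      (((ω.1 : ℝ) + ω.2 : ℝ) : EReal) ≤ c₂} with hsdef
  have hrestr : ∫⁻ ω in s, ENNReal.ofReal (f ω) ∂(μ.prod ν)
      ≤ ENNReal.ofReal R :=
    le_trans (lintegral_mono' Measure.restrict_le_self le_rfl) key
  calc ∫ ω in s, f ω ∂(μ.prod ν)
      = (∫⁻ ω in s, ENNReal.ofReal (f ω) ∂(μ.prod ν)).toReal :=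
        integral_eq_lintegral_of_nonneg_ae (ae_of_all _ hfnn) hmesf.aestronglyMeasurable
    _ ≤ (ENNReal.ofReal R).toReal := ENNReal.toReal_mono ENNReal.ofReal_ne_top hrestr
    _ = R := ENNReal.toReal_ofReal hR0
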